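/- arXiv:2204.04878 — 2 statements merged into one kernel-verified Lean document; each statement's English description precedes it below -/
import Mathlib

section
/- If bidder k bids untruthfully but the resulting optimal allocation assigns it the same winning status as under truthful bidding (ξ*'_k = ξ*_k) and the allocation of others achieves the truthful optimum, then its utility change satisfies u'_k − u_k = S_b(ξ*') − S_b(ξ*) ≤ 0, where S_b denotes social welfare evaluated with the truthful bid vector b. -/
open Finset

/-- Social welfare of an allocation (winner set) `A`: `-∑_{i∈A} b_i - ĉ`. -/
noncomputable def welfare {n : ℕ} (b : Fin n → ℝ) (chat : ℝ) (A : Finset (Fin n)) : ℝ :=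
  -(∑ i ∈ A, b i) - chat

/-- Feasibility: total channel demand within the budget `B`. -/
def feasible {n : ℕ} (C : Fin n → ℕ) (B : ℕ) (A : Finset (Fin n)) : Prop :=
  ∑ i ∈ A, C i ≤ B

/-- if bidder `k` bids untruthfully but keeps the same winning
status (`k ∈ ξ' ↔ k ∈ ξ*`) in a feasible deviating allocation `ξ'`, then
`u' − u = S_b(ξ') − S_b(ξ*) ≤ 0`, where `S_b` is the welfare evaluated with the
truthful bid vector `b`. -/
theorem vcg_deviation_loss {n : ℕ} (b c : Fin n → ℝ) (C : Fin n → ℕ) (B : ℕ)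
    (chat : ℝ) (k : Fin n) (bk' : ℝ) (hb : b k = c k)
    (b' : Fin n → ℝ) (hb' : b' = Function.update b k bk')
    (ξstar ξ' : Finset (Fin n)) (Wφ : ℝ)
    (hξfeas : feasible C B ξstar)
    (hξopt : ∀ A, feasible C B A → welfare b chat A ≤ welfare b chat ξstar)
    (hξ'feas : feasible C B ξ')
    (hsame : k ∈ ξ' ↔ k ∈ ξstar)
    (u u' : ℝ)
    (hu : u = welfare b chat ξstar - Wφ)
    (hu' : u' = welfare b' chat ξ' - Wφ
            + (if k ∈ ξ' then (1 : ℝ) else 0) * bk'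
            - (if k ∈ ξ' then (1 : ℝ) else 0) * c k) :
    u' - u = welfare b chat ξ' - welfare b chat ξstar ∧ u' - u ≤ 0 := by
  have hsum : ∑ i ∈ ξ', b' i
      = ∑ i ∈ ξ', b i + (if k ∈ ξ' then (1 : ℝ) else 0) * (bk' - b k) := by
    subst hb'
    by_cases hk : k ∈ ξ'
    · simp only [hk, if_true, one_mul]
      rw [← Finset.sum_erase_add _ (Function.update b k bk') hk]
      have herase : ∑ i ∈ ξ'.erase k, Function.update b k bk' i = ∑ i ∈ ξ'.erase k, b i :=
        Finset.sum_congr rfl (fun i hi => Function.update_of_ne (Finset.ne_of_mem_erase hi) _ _)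
      rw [herase, Function.update_self, ← Finset.sum_erase_add ξ' b hk]
      ring
    · simp only [hk, if_false, zero_mul, add_zero]
      exact Finset.sum_congr rfl (fun i hi =>
        Function.update_of_ne (by rintro rfl; exact hk hi) _ _)
  have heq : u' - u = welfare b chat ξ' - welfare b chat ξstar := by
    subst hu hu'
    simp only [welfare, hsum, hb]
    ring
  exact ⟨heq, heq ▸ sub_nonpos.mpr (hξopt ξ' hξ'feas)⟩
end

section
/- If a losing bidder under truthful bidding (ξ*_k = 0) deviates to any bid b'_k, its resulting utility never exceeds its truthful utility: u'_k ≤ u_k = S(ξ*) − S_{N\{k}}(φ*). -/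
open Finset

/-- a losing bidder under truthful bidding (`k ∉ ξ*`) cannot gain
by deviating to any bid `bk'`: its deviation utility never exceeds its truthful
utility `u = S(ξ*) − S_{N\{k}}(φ*)`. -/
theorem losing_bidder_cannot_gain {n : ℕ} (b c : Fin n → ℝ) (C : Fin n → ℕ) (B : ℕ)
    (chat : ℝ) (k : Fin n) (bk' : ℝ) (hb : b k = c k)
    (b' : Fin n → ℝ) (hb' : b' = Function.update b k bk')
    (ξstar ξ' φstar : Finset (Fin n))
    (hloser : k ∉ ξstar)
    (hξfeas : feasible C B ξstar)
    (hξopt : ∀ A, feasible C B A → welfare b chat A ≤ welfare b chat ξstar)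
    (hξ'feas : feasible C B ξ')
    (hξ'opt : ∀ A, feasible C B A → welfare b' chat A ≤ welfare b' chat ξ')
    (hφfeas : feasible C B φstar) (hφk : k ∉ φstar)
    (hφopt : ∀ A, feasible C B A → k ∉ A → welfare b chat A ≤ welfare b chat φstar)
    (u u' : ℝ)
    (hu : u = welfare b chat ξstar - welfare b chat φstar)
    (hu' : u' = welfare b' chat ξ' - welfare b chat φstar
            + (if k ∈ ξ' then (1 : ℝ) else 0) * bk'
            - (if k ∈ ξ' then (1 : ℝ) else 0) * c k) :
    u' ≤ u := by
  have key : welfare b' chat ξ' + (if k ∈ ξ' then (1 : ℝ) else 0) * bk'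
      - (if k ∈ ξ' then (1 : ℝ) else 0) * c k = welfare b chat ξ' := by
    by_cases hk : k ∈ ξ'
    · simp only [hk, if_pos, one_mul, welfare]
      rw [← Finset.add_sum_erase _ _ hk, ← Finset.add_sum_erase _ _ hk]
      have h1 : b' k = bk' := by rw [hb']; simp
      have h2 : ∀ i ∈ ξ'.erase k, b' i = b i := by
        intro i hi
        rw [hb', Function.update_of_ne (Finset.ne_of_mem_erase hi)]
      rw [Finset.sum_congr rfl h2, h1, hb]
      ring
    · simp only [hk, if_neg, not_false_iff, zero_mul, welfare, add_zero, sub_zero]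
      have h2 : ∀ i ∈ ξ', b' i = b i := by
        intro i hi
        rw [hb', Function.update_of_ne (by rintro rfl; exact hk hi)]
      rw [Finset.sum_congr rfl h2]
  have := hξopt ξ' hξ'feas
  rw [hu', hu]
  linarith [key]
end
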